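/- arXiv:1709.01180 — 3 statements merged into one kernel-verified Lean document; each statement's English description precedes it below -/
import Mathlib

section
/- Let g(n) = ((N−n)·N²·Γ)/T + n^{2/3}/T^{2/3} for n ∈ [1, N], with N ≥ 1, T > 0, Γ > 0. If T > (27/8)·Γ³·N⁷ then g'(n) > 0 for all n ∈ [1, N], so g is strictly increasing on [1, N] and attains its minimum at n = 1. -/
open Finset

/-!
With `c = Γ N²`, the derivative `2 / (3 T^{2/3} n^{1/3}) - c / T` is positive exactly when
`3 c n^{1/3} < 2 T^{1/3}`, i.e. after cubing when `27 c³ n < 8 T`. On `[1, N]` the left side is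
at most `27 Γ³ N⁷`, so the budget condition makes `g` strictly increasing there.
-/

namespace Real

lemma mul_rpow_one_third_lt_mul_rpow_one_third {a b x y : ℝ} (ha : 0 ≤ a) (hb : 0 ≤ b)
    (hx : 0 ≤ x) (hy : 0 ≤ y) (h : a ^ 3 * x < b ^ 3 * y) :
    a * x ^ ((1 : ℝ) / 3) < b * y ^ ((1 : ℝ) / 3) := by
  have cube_root : ∀ {c z : ℝ}, 0 ≤ c → 0 ≤ z →
      c * z ^ ((1 : ℝ) / 3) = (c ^ 3 * z) ^ ((1 : ℝ) / 3) := fun hc hz => by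
    rw [mul_rpow (by positivity) hz, one_div, ← Nat.cast_ofNat, pow_rpow_inv_natCast hc three_ne_zero]
  rw [cube_root ha hx, cube_root hb hy]
  exact rpow_lt_rpow (by positivity) h (by norm_num)

end Real

lemma hasDerivAt_mseBound (M Γ T : ℝ) {x : ℝ} (hx : 0 < x) :
    HasDerivAt (fun n : ℝ => ((M - n) * M ^ 2 * Γ) / T + n ^ ((2 : ℝ) / 3) / T ^ ((2 : ℝ) / 3))
      (2 / (3 * T ^ ((2 : ℝ) / 3) * x ^ ((1 : ℝ) / 3)) - Γ * M ^ 2 / T) x := by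
  have hbias := ((((hasDerivAt_id x).const_sub M).mul_const (M ^ 2)).mul_const Γ).div_const T
  have hvar := (Real.hasDerivAt_rpow_const (p := (2 : ℝ) / 3) (Or.inl hx.ne')).div_const
    (T ^ ((2 : ℝ) / 3))
  refine (hbias.add hvar).congr_deriv ?_
  rw [show (2 : ℝ) / 3 - 1 = -(1 / 3) by norm_num, Real.rpow_neg hx.le]
  field_simp
  ring

lemma mseBound_deriv_pos {c T x : ℝ} (hc : 0 ≤ c) (hx : 0 < x) (h : 27 * c ^ 3 * x < 8 * T) :
    0 < 2 / (3 * T ^ ((2 : ℝ) / 3) * x ^ ((1 : ℝ) / 3)) - c / T := by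
  have hT : 0 < T := by nlinarith [pow_nonneg hc 3]
  have hcube : 3 * c * x ^ ((1 : ℝ) / 3) < 2 * T ^ ((1 : ℝ) / 3) :=
    Real.mul_rpow_one_third_lt_mul_rpow_one_third (by positivity) zero_le_two hx.le hT.le
      (by linarith)
  have hsplit : T ^ ((2 : ℝ) / 3) * T ^ ((1 : ℝ) / 3) = T := by
    rw [← Real.rpow_add hT]; norm_num
  have hT23 : 0 < T ^ ((2 : ℝ) / 3) := Real.rpow_pos_of_pos hT _
  rw [sub_pos, div_lt_div_iff₀ hT (by positivity)]
  nlinarith [mul_lt_mul_of_pos_right hcube hT23]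

theorem mse_bound_large_budget_general (N : ℕ) (T Γ : ℝ) (hΓ : 0 < Γ)
    (hbudget : (27 / 8) * Γ ^ 3 * (N : ℝ) ^ 7 < T) :
    let g : ℝ → ℝ := fun n =>
      (((N : ℝ) - n) * (N : ℝ) ^ 2 * Γ) / T + n ^ ((2 : ℝ) / 3) / T ^ ((2 : ℝ) / 3)
    let g' : ℝ → ℝ := fun n =>
      2 / (3 * T ^ ((2 : ℝ) / 3) * n ^ ((1 : ℝ) / 3)) - Γ * (N : ℝ) ^ 2 / T
    (∀ n ∈ Set.Icc (1 : ℝ) (N : ℝ), 0 < g' n) ∧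
      StrictMonoOn g (Set.Icc (1 : ℝ) (N : ℝ)) ∧
      (∀ n ∈ Set.Icc (1 : ℝ) (N : ℝ), g 1 ≤ g n) := by
  intro g g'
  have hderiv : ∀ n ∈ Set.Icc (1 : ℝ) N, HasDerivAt g (g' n) n := fun n hn =>
    hasDerivAt_mseBound N Γ T (one_pos.trans_le hn.1)
  have hpos : ∀ n ∈ Set.Icc (1 : ℝ) N, 0 < g' n := by
    rintro n ⟨hn1, hnN⟩
    refine mseBound_deriv_pos (by positivity) (one_pos.trans_le hn1) ?_
    have : Γ ^ 3 * (N : ℝ) ^ 6 * n ≤ Γ ^ 3 * (N : ℝ) ^ 6 * N := by gcongr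
    linarith
  have hmono : StrictMonoOn g (Set.Icc (1 : ℝ) N) :=
    strictMonoOn_of_hasDerivWithinAt_pos (convex_Icc _ _)
      (fun n hn => (hderiv n hn).continuousAt.continuousWithinAt)
      (fun n hn => (hderiv n (interior_subset hn)).hasDerivWithinAt)
      (fun n hn => hpos n (interior_subset hn))
  exact ⟨hpos, hmono, fun n hn =>
    hmono.monotoneOn ⟨le_rfl, hn.1.trans hn.2⟩ hn hn.1⟩

theorem mse_bound_large_budget (N : ℕ) (T Γ : ℝ) (hN : 1 ≤ N) (hT : 0 < T) (hΓ : 0 < Γ)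
    (hbudget : (27 / 8) * Γ ^ 3 * (N : ℝ) ^ 7 < T) :
    let g : ℝ → ℝ := fun n =>
      (((N : ℝ) - n) * (N : ℝ) ^ 2 * Γ) / T + n ^ ((2 : ℝ) / 3) / T ^ ((2 : ℝ) / 3)
    let g' : ℝ → ℝ := fun n =>
      2 / (3 * T ^ ((2 : ℝ) / 3) * n ^ ((1 : ℝ) / 3)) - Γ * (N : ℝ) ^ 2 / T
    (∀ n ∈ Set.Icc (1 : ℝ) (N : ℝ), 0 < g' n) ∧
      StrictMonoOn g (Set.Icc (1 : ℝ) (N : ℝ)) ∧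
      (∀ n ∈ Set.Icc (1 : ℝ) (N : ℝ), g 1 ≤ g n) :=
  mse_bound_large_budget_general N T Γ hΓ hbudget
end

section
/- Let β_1,...,β_N ∈ R^d, and let z_i, b_i be indicators of independent uniform random subsets of sizes n₂ and n₁ of {1,...,N}. Then E[‖Σ_i β_i ((N/n₂)z_i − (N/n₁)b_i)‖²] = (N/n₂ + N/n₁ − 2)·Σ_{i,j}⟨β_i,β_j⟩ − 2·( N(N−n₂)/(n₂(N−1)) + N(N−n₁)/(n₁(N−1)) )·Σ_{i<j}⟨β_i,β_j⟩. -/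
/-!
Expanding the squared norm turns the average into `∑ i, ∑ j, w i j * ⟪β i, β j⟫`, where `w i j`
is the mean of the product of the coefficients of `β i` and `β j`. As the two subsets are
independent, `w i j` only involves the first two inclusion moments of a uniform `k`-subset of `N`
points, `P(i ∈ S) = k / N` and `P(i ∈ S ∧ j ∈ S) = k (k - 1) / (N (N - 1))` for `i ≠ j`, both
obtained by counting the `k`-subsets that contain a given set. So `w` takes one value on the
diagonal and another off it, and the symmetry of the Gram matrix gives the stated form.
-/

open Finset

theorem sum_sum_sub_mul_sub {R σ τ ι : Type*} [CommRing R] (A : Finset σ) (B : Finset τ)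
    (u : τ → ι → R) (v : σ → ι → R) (i j : ι) :
    ∑ s ∈ A, ∑ t ∈ B, (u t i - v s i) * (u t j - v s j) =
      #A • ∑ t ∈ B, u t i * u t j - (∑ s ∈ A, v s i) * (∑ t ∈ B, u t j)
        - (∑ s ∈ A, v s j) * (∑ t ∈ B, u t i) + #B • ∑ s ∈ A, v s i * v s j := by
  simp only [sub_mul, mul_sub, sum_sub_distrib, sum_mul_sum, sum_const, smul_sum]
  simp only [mul_comm (u _ _) (v _ _)]
  abel

theorem sum_sum_ite_eq_mul {R ι : Type*} [CommRing R] [DecidableEq ι] (s : Finset ι)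
    (x : ι → ι → R) (d f : R) :
    ∑ i ∈ s, ∑ j ∈ s, (if i = j then d else f) * x i j =
      f * ∑ i ∈ s, ∑ j ∈ s, x i j + (d - f) * ∑ i ∈ s, x i i := by
  have split : ∀ i j, (if i = j then d else f) * x i j =
      f * x i j + if i = j then (d - f) * x i j else 0 := by
    intro i j
    split_ifs <;> ring
  simp only [split, sum_add_distrib, sum_ite_eq, sum_ite_mem, inter_self, ← mul_sum]

theorem sum_sum_eq_sum_add_two_mul_sum_lt_of_symm {R ι : Type*} [CommSemiring R] [Fintype ι]
    [LinearOrder ι] {x : ι → ι → R} (hx : ∀ i j, x i j = x j i) :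
    ∑ i, ∑ j, x i j = ∑ i, x i i + 2 * ∑ i, ∑ j ∈ univ.filter (fun j => i < j), x i j := by
  have split : ∀ i j, x i j = (if i = j then x i j else 0) + (if i < j then x i j else 0) +
      (if j < i then x j i else 0) := by
    intro i j
    rcases lt_trichotomy i j with h | rfl | h
    · simp [h, h.ne, h.not_gt]
    · simp
    · simp [h, h.ne', h.not_gt, hx i j]
  rw [sum_congr rfl fun i _ => sum_congr rfl fun j _ => split i j]
  simp only [sum_add_distrib, sum_ite_eq, mem_univ, if_true]
  rw [sum_comm (f := fun i j => if j < i then x j i else 0)]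
  simp only [← sum_filter]
  ring

theorem norm_sq_sum_smul {E ι : Type*} [NormedAddCommGroup E] [InnerProductSpace ℝ E]
    (s : Finset ι) (c : ι → ℝ) (v : ι → E) :
    ‖∑ i ∈ s, c i • v i‖ ^ 2 = ∑ i ∈ s, ∑ j ∈ s, c i * c j * inner ℝ (v i) (v j) := by
  simp only [← real_inner_self_eq_norm_sq, sum_inner, inner_sum, real_inner_smul_left,
    real_inner_smul_right, mul_assoc]
  exact sum_congr rfl fun i _ => sum_congr rfl fun j _ => by rw [real_inner_comm]

theorem sum_norm_sq_sum_smul {E σ ι : Type*} [NormedAddCommGroup E] [InnerProductSpace ℝ E]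
    (A : Finset σ) (s : Finset ι) (c : σ → ι → ℝ) (v : ι → E) :
    ∑ p ∈ A, ‖∑ i ∈ s, c p i • v i‖ ^ 2 =
      ∑ i ∈ s, ∑ j ∈ s, (∑ p ∈ A, c p i * c p j) * inner ℝ (v i) (v j) := by
  simp only [norm_sq_sum_smul, sum_mul]
  rw [sum_comm]
  exact sum_congr rfl fun i _ => sum_comm

section SubsetMoments

variable {α : Type*} [DecidableEq α]

theorem card_filter_powersetCard_subset_mul_choose {s t : Finset α} (ht : t ⊆ s) (k : ℕ) :
    #{S ∈ s.powersetCard k | t ⊆ S} * (#s).choose #t = (#s).choose k * k.choose #t := by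
  rcases le_or_gt #t k with htk | hkt
  · rw [card_filter_powersetCard_subset t s k ht htk, Nat.choose_mul htk, mul_comm]
  · have hempty : #{S ∈ s.powersetCard k | t ⊆ S} = 0 := by
      refine card_eq_zero.2 (filter_eq_empty_iff.2 fun S hS htS => ?_)
      have := card_le_card htS
      rw [(mem_powersetCard.1 hS).2] at this
      omega
    rw [hempty, Nat.choose_eq_zero_of_lt hkt, zero_mul, mul_zero]

theorem sum_powersetCard_ite_subset_mul_choose {s t : Finset α} (ht : t ⊆ s) (k : ℕ) :
    (∑ S ∈ s.powersetCard k, if t ⊆ S then (1 : ℝ) else 0) * (#s).choose #t =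
      (#s).choose k * k.choose #t := by
  rw [sum_boole]
  exact_mod_cast card_filter_powersetCard_subset_mul_choose ht k

theorem sum_powersetCard_ite_mem {s : Finset α} {i : α} (hi : i ∈ s) (k : ℕ) :
    ∑ S ∈ s.powersetCard k, (if i ∈ S then (1 : ℝ) else 0) = k / #s * (#s).choose k := by
  have hs : (#s : ℝ) ≠ 0 := by exact_mod_cast (card_pos.2 ⟨i, hi⟩).ne'
  have key := sum_powersetCard_ite_subset_mul_choose (singleton_subset_iff.2 hi) k
  simp only [singleton_subset_iff, card_singleton, Nat.choose_one_right] at key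
  rw [div_mul_eq_mul_div, eq_div_iff hs]
  linear_combination key

theorem sum_powersetCard_ite_mem_mul_ite_mem {s : Finset α} {i j : α} (hi : i ∈ s)
    (hj : j ∈ s) (k : ℕ) :
    ∑ S ∈ s.powersetCard k, (if i ∈ S then (1 : ℝ) else 0) * (if j ∈ S then 1 else 0) =
      (if i = j then (k : ℝ) / #s else k * (k - 1) / (#s * (#s - 1))) * (#s).choose k := by
  simp_rw [ite_zero_mul_ite_zero, one_mul]
  split_ifs with hij
  · subst hij
    simpa only [and_self] using sum_powersetCard_ite_mem hi k
  · have hs : (1 : ℝ) < #s := by exact_mod_cast one_lt_card.2 ⟨i, hi, j, hj, hij⟩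
    have key :=
      sum_powersetCard_ite_subset_mul_choose (insert_subset hi (singleton_subset_iff.2 hj)) k
    simp only [insert_subset_iff, singleton_subset_iff, card_pair hij, Nat.cast_choose_two] at key
    rw [div_mul_eq_mul_div, eq_div_iff (by nlinarith)]
    linear_combination 2 * key

theorem sum_sum_powersetCard_scaled_indicator_sub_mul {s : Finset α} {i j : α} (hi : i ∈ s)
    (hj : j ∈ s) {k₁ k₂ : ℕ} (hk₁ : k₁ ≠ 0) (hk₂ : k₂ ≠ 0) :
    ∑ S₁ ∈ s.powersetCard k₁, ∑ S₂ ∈ s.powersetCard k₂,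
        ((#s : ℝ) / k₂ * (if i ∈ S₂ then 1 else 0) - #s / k₁ * (if i ∈ S₁ then 1 else 0)) *
          ((#s : ℝ) / k₂ * (if j ∈ S₂ then 1 else 0) - #s / k₁ * (if j ∈ S₁ then 1 else 0)) =
      (#s).choose k₁ * (#s).choose k₂ *
        if i = j then (#s : ℝ) / k₂ + #s / k₁ - 2
        else #s * (k₂ - 1) / (k₂ * (#s - 1)) + #s * (k₁ - 1) / (k₁ * (#s - 1)) - 2 := by
  rw [sum_sum_sub_mul_sub (s.powersetCard k₁) (s.powersetCard k₂)
    (fun S i => (#s : ℝ) / k₂ * if i ∈ S then 1 else 0)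
    (fun S i => (#s : ℝ) / k₁ * if i ∈ S then 1 else 0) i j]
  simp only [mul_mul_mul_comm ((#s : ℝ) / _), ← mul_sum,
    sum_powersetCard_ite_mem_mul_ite_mem hi hj, sum_powersetCard_ite_mem hi,
    sum_powersetCard_ite_mem hj, card_powersetCard, nsmul_eq_mul]
  have hs : (#s : ℝ) ≠ 0 := by exact_mod_cast (card_pos.2 ⟨i, hi⟩).ne'
  have hk₁' : (k₁ : ℝ) ≠ 0 := by exact_mod_cast hk₁
  have hk₂' : (k₂ : ℝ) ≠ 0 := by exact_mod_cast hk₂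
  split_ifs with hij
  · field_simp
    ring
  · have hs1 : (#s : ℝ) - 1 ≠ 0 := by
      rw [sub_ne_zero]
      exact_mod_cast (one_lt_card.2 ⟨i, hi, j, hj, hij⟩).ne'
    field_simp
    ring

end SubsetMoments

theorem vr_B_term (N n₁ n₂ d : ℕ) (hN : 2 ≤ N)
    (hn₁ : 1 ≤ n₁) (hn₁N : n₁ ≤ N) (hn₂ : 1 ≤ n₂) (hn₂N : n₂ ≤ N)
    (β : Fin N → EuclideanSpace ℝ (Fin d)) :
    (∑ S₁ ∈ Finset.powersetCard n₁ (Finset.univ : Finset (Fin N)),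
        ∑ S₂ ∈ Finset.powersetCard n₂ (Finset.univ : Finset (Fin N)),
          ‖∑ i, (((N : ℝ) / n₂) * (if i ∈ S₂ then (1 : ℝ) else 0) -
              ((N : ℝ) / n₁) * (if i ∈ S₁ then (1 : ℝ) else 0)) • β i‖ ^ 2) /
        ((N.choose n₁ : ℝ) * (N.choose n₂ : ℝ))
      = ((N : ℝ) / n₂ + (N : ℝ) / n₁ - 2) * ∑ i, ∑ j, (inner ℝ (β i) (β j) : ℝ)
          - 2 * ((N : ℝ) * ((N : ℝ) - n₂) / ((n₂ : ℝ) * ((N : ℝ) - 1)) +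
                  (N : ℝ) * ((N : ℝ) - n₁) / ((n₁ : ℝ) * ((N : ℝ) - 1))) *
              ∑ i, ∑ j ∈ Finset.univ.filter (fun j => i < j), (inner ℝ (β i) (β j) : ℝ) := by
  have hweight := fun i j : Fin N => sum_sum_powersetCard_scaled_indicator_sub_mul
    (mem_univ i) (mem_univ j) (Nat.one_le_iff_ne_zero.1 hn₁) (Nat.one_le_iff_ne_zero.1 hn₂)
  simp only [card_univ, Fintype.card_fin] at hweight
  have hC : (N.choose n₁ : ℝ) * (N.choose n₂ : ℝ) ≠ 0 := by
    have := Nat.choose_pos hn₁N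
    have := Nat.choose_pos hn₂N
    positivity
  rw [← sum_product', sum_norm_sq_sum_smul]
  simp only [sum_product, hweight, mul_assoc, ← mul_sum]
  rw [← mul_assoc, mul_div_cancel_left₀ _ hC, sum_sum_ite_eq_mul,
    sum_sum_eq_sum_add_two_mul_sum_lt_of_symm fun i j => real_inner_comm _ _]
  have hN1 : (N : ℝ) - 1 ≠ 0 := by
    rw [sub_ne_zero]
    exact_mod_cast (by omega : N ≠ 1)
  have hn₁0 : (n₁ : ℝ) ≠ 0 := by positivity
  have hn₂0 : (n₂ : ℝ) ≠ 0 := by positivity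
  field_simp
  ring
end

section
/- For β_1,...,β_N ∈ R^d, N ≥ 2, and 1 ≤ n₂ < n₁ ≤ N, the quantity λ := (N/n₂ − N/n₁)·Σ_{i,j}⟨β_i,β_j⟩ − 2·( N(N−n₂)/(n₂(N−1)) − N(N−n₁)/(n₁(N−1)) )·Σ_{i<j}⟨β_i,β_j⟩ satisfies λ = (N³(n₁−n₂)/(n₁n₂))·( (1/N²)Σ_{i,j}⟨β_i,β_j⟩ − (2/(N(N−1)))Σ_{i<j}⟨β_i,β_j⟩ ) ≥ 0. -/
/-!
Write `S = ∑ᵢⱼ ⟪βᵢ, βⱼ⟫ = ‖∑ᵢ βᵢ‖²` and `T = ∑_{i<j} ⟪βᵢ, βⱼ⟫`. The identity is pure field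
arithmetic, and its right-hand side is a nonnegative multiple of `((N - 1) S - 2 N T) / (N² (N - 1))`.
Since `S = ∑ᵢ ‖βᵢ‖² + 2T`, the numerator is `N ∑ᵢ ‖βᵢ‖² - ‖∑ᵢ βᵢ‖²`, which is nonnegative by
Cauchy–Schwarz.
-/

open Finset

theorem Fintype.sum_sum_eq_sum_add_sum_lt {ι M : Type*} [Fintype ι] [LinearOrder ι]
    [AddCommMonoid M] (f : ι → ι → M) :
    ∑ i, ∑ j, f i j = ∑ i, f i i + ∑ i, ∑ j with i < j, (f i j + f j i) := by
  have hsplit : ∀ i j, f i j = (if i < j then f i j else 0) + (if i = j then f i j else 0)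
      + (if j < i then f i j else 0) := by
    intro i j
    rcases lt_trichotomy i j with h | rfl | h
    · simp [h, h.ne, h.not_gt]
    · simp
    · simp [h, h.ne', h.not_gt]
  have hswap : ∑ i, ∑ j, (if j < i then f i j else 0) = ∑ i, ∑ j, (if i < j then f j i else 0) :=
    sum_comm
  calc ∑ i, ∑ j, f i j
      = ∑ i, ∑ j, ((if i < j then f i j else 0) + (if i = j then f i j else 0)
          + (if j < i then f i j else 0)) := by simp_rw [← hsplit]
    _ = ∑ i, f i i + ∑ i, ∑ j, ((if i < j then f i j else 0) + (if i < j then f j i else 0)) := by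
      simp only [sum_add_distrib, sum_ite_eq, hswap]
      abel
    _ = ∑ i, f i i + ∑ i, ∑ j with i < j, (f i j + f j i) := by
      simp only [sum_filter, ite_add_zero]

section

variable {ι E : Type*} [NormedAddCommGroup E]

theorem norm_sum_sq_le_card_mul_sum_norm_sq (s : Finset ι) (β : ι → E) :
    ‖∑ i ∈ s, β i‖ ^ 2 ≤ #s * ∑ i ∈ s, ‖β i‖ ^ 2 :=
  (pow_le_pow_left₀ (norm_nonneg _) (norm_sum_le _ _) 2).trans sq_sum_le_card_mul_sum_sq

variable [InnerProductSpace ℝ E]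

theorem sum_sum_inner_eq_norm_sum_sq (s : Finset ι) (β : ι → E) :
    ∑ i ∈ s, ∑ j ∈ s, inner ℝ (β i) (β j) = ‖∑ i ∈ s, β i‖ ^ 2 := by
  simp_rw [← real_inner_self_eq_norm_sq, sum_inner, inner_sum]

variable [Fintype ι] [LinearOrder ι]

theorem sum_sum_inner_eq_sum_norm_sq_add_two_mul_sum_lt (β : ι → E) :
    ∑ i, ∑ j, inner ℝ (β i) (β j)
      = ∑ i, ‖β i‖ ^ 2 + 2 * ∑ i, ∑ j with i < j, inner ℝ (β i) (β j) := by
  simp_rw [Fintype.sum_sum_eq_sum_add_sum_lt, real_inner_self_eq_norm_sq,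
    real_inner_comm (β _) (β _), ← two_mul, mul_sum]

theorem card_mul_two_mul_sum_lt_inner_le (β : ι → E) :
    Fintype.card ι * (2 * ∑ i, ∑ j with i < j, inner ℝ (β i) (β j))
      ≤ (Fintype.card ι - 1) * ∑ i, ∑ j, inner ℝ (β i) (β j) := by
  have hsplit := sum_sum_inner_eq_sum_norm_sq_add_two_mul_sum_lt β
  have hcs := norm_sum_sq_le_card_mul_sum_norm_sq univ β
  rw [← sum_sum_inner_eq_norm_sum_sq, card_univ] at hcs
  rw [show 2 * ∑ i, ∑ j with i < j, inner ℝ (β i) (β j)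
    = ∑ i, ∑ j, inner ℝ (β i) (β j) - ∑ i, ‖β i‖ ^ 2 by linarith]
  linarith

end

theorem vr_gain_lambda_nonneg_general (N n₁ n₂ d : ℕ) (hN : 2 ≤ N)
    (hn₂ : 1 ≤ n₂) (hn₂n₁ : n₂ < n₁)
    (β : Fin N → EuclideanSpace ℝ (Fin d)) :
    ((N : ℝ) / n₂ - (N : ℝ) / n₁) * ∑ i, ∑ j, (inner ℝ (β i) (β j) : ℝ)
        - 2 * ((N : ℝ) * ((N : ℝ) - n₂) / ((n₂ : ℝ) * ((N : ℝ) - 1)) -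
                (N : ℝ) * ((N : ℝ) - n₁) / ((n₁ : ℝ) * ((N : ℝ) - 1))) *
            ∑ i, ∑ j ∈ Finset.univ.filter (fun j => i < j), (inner ℝ (β i) (β j) : ℝ)
      = ((N : ℝ) ^ 3 * ((n₁ : ℝ) - n₂) / ((n₁ : ℝ) * n₂)) *
          ((1 / (N : ℝ) ^ 2) * ∑ i, ∑ j, (inner ℝ (β i) (β j) : ℝ)
            - (2 / ((N : ℝ) * ((N : ℝ) - 1))) *
                ∑ i, ∑ j ∈ Finset.univ.filter (fun j => i < j), (inner ℝ (β i) (β j) : ℝ)) ∧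
    0 ≤ ((N : ℝ) / n₂ - (N : ℝ) / n₁) * ∑ i, ∑ j, (inner ℝ (β i) (β j) : ℝ)
        - 2 * ((N : ℝ) * ((N : ℝ) - n₂) / ((n₂ : ℝ) * ((N : ℝ) - 1)) -
                (N : ℝ) * ((N : ℝ) - n₁) / ((n₁ : ℝ) * ((N : ℝ) - 1))) *
            ∑ i, ∑ j ∈ Finset.univ.filter (fun j => i < j), (inner ℝ (β i) (β j) : ℝ) := by
  have hbound := card_mul_two_mul_sum_lt_inner_le β
  rw [Fintype.card_fin] at hbound
  set S := ∑ i, ∑ j, (inner ℝ (β i) (β j) : ℝ)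
  set T := ∑ i, ∑ j ∈ Finset.univ.filter (fun j => i < j), (inner ℝ (β i) (β j) : ℝ)
  have hN1 : (1 : ℝ) < N := by exact_mod_cast hN
  have hn₂pos : (0 : ℝ) < n₂ := by exact_mod_cast hn₂
  have hn₂n₁' : (n₂ : ℝ) < n₁ := by exact_mod_cast hn₂n₁
  have hN0 : (N : ℝ) - 1 ≠ 0 := by linarith
  have hn₁0 : (n₁ : ℝ) ≠ 0 := by linarith
  have hid : (N / n₂ - N / n₁) * S - 2 * (N * (N - n₂) / (n₂ * (N - 1))
        - N * (N - n₁) / (n₁ * (N - 1))) * T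
      = (N ^ 3 * (n₁ - n₂) / (n₁ * n₂)) * (1 / N ^ 2 * S - 2 / (N * (N - 1)) * T) := by
    field_simp
    ring
  have hbracket : 1 / (N : ℝ) ^ 2 * S - 2 / (N * (N - 1)) * T
      = ((N - 1) * S - N * (2 * T)) / (N ^ 2 * (N - 1)) := by
    field_simp
  refine ⟨hid, hid ▸ mul_nonneg ?_ (hbracket ▸ div_nonneg (by linarith) ?_)⟩
  · exact div_nonneg (mul_nonneg (by positivity) (by linarith)) (by positivity)
  · exact mul_nonneg (by positivity) (by linarith)

theorem vr_gain_lambda_nonneg (N n₁ n₂ d : ℕ) (hN : 2 ≤ N)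
    (hn₂ : 1 ≤ n₂) (hn₂n₁ : n₂ < n₁) (hn₁N : n₁ ≤ N)
    (β : Fin N → EuclideanSpace ℝ (Fin d)) :
    ((N : ℝ) / n₂ - (N : ℝ) / n₁) * ∑ i, ∑ j, (inner ℝ (β i) (β j) : ℝ)
        - 2 * ((N : ℝ) * ((N : ℝ) - n₂) / ((n₂ : ℝ) * ((N : ℝ) - 1)) -
                (N : ℝ) * ((N : ℝ) - n₁) / ((n₁ : ℝ) * ((N : ℝ) - 1))) *
            ∑ i, ∑ j ∈ Finset.univ.filter (fun j => i < j), (inner ℝ (β i) (β j) : ℝ)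
      = ((N : ℝ) ^ 3 * ((n₁ : ℝ) - n₂) / ((n₁ : ℝ) * n₂)) *
          ((1 / (N : ℝ) ^ 2) * ∑ i, ∑ j, (inner ℝ (β i) (β j) : ℝ)
            - (2 / ((N : ℝ) * ((N : ℝ) - 1))) *
                ∑ i, ∑ j ∈ Finset.univ.filter (fun j => i < j), (inner ℝ (β i) (β j) : ℝ)) ∧
    0 ≤ ((N : ℝ) / n₂ - (N : ℝ) / n₁) * ∑ i, ∑ j, (inner ℝ (β i) (β j) : ℝ)
        - 2 * ((N : ℝ) * ((N : ℝ) - n₂) / ((n₂ : ℝ) * ((N : ℝ) - 1)) -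
                (N : ℝ) * ((N : ℝ) - n₁) / ((n₁ : ℝ) * ((N : ℝ) - 1))) *
            ∑ i, ∑ j ∈ Finset.univ.filter (fun j => i < j), (inner ℝ (β i) (β j) : ℝ) :=
  vr_gain_lambda_nonneg_general N n₁ n₂ d hN hn₂ hn₂n₁ β
end
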